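/- Let V : ℝ → ℝ be continuously differentiable and set Ṽ(ρ) = V(√(1−ρ²)). At every point p = (ρ, η, θ, φ) with 0 < ρ < 1 and η > 0, the vector X_H(p) with components X_H = (η cos δ, −(ρη(1−ρ²sin²δ)/(1−ρ²) + (1−ρ²)Ṽ'(ρ)/η)·η cos δ, (η/ρ) sin δ, (ρη(1−ρ²sin²δ)/(1−ρ²) + (1−ρ²)Ṽ'(ρ)/η)·sin δ), where δ = φ − θ, satisfies ω_N(p)(X_H(p), v) = dH_N(p)(v) for all v ∈ ℝ⁴, where H_N(ρ, η, θ, φ) = (η²/2)·(1 − ρ² sin²δ)/(1 − ρ²) + Ṽ(ρ). -/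

import Mathlib

open Real

/-- The symplectic form `ω_N` on the northern chart domain
`{(ρ, η, θ, φ) : 0 < ρ < 1, η > 0}`, as a bilinear-form-valued function. -/
noncomputable def omegaN (p a b : Fin 4 → ℝ) : ℝ :=
  Real.cos (p 3 - p 2) / (1 - p 0 ^ 2) * (a 0 * b 1 - a 1 * b 0)
  + p 0 ^ 2 * p 1 * Real.sin (p 3 - p 2) / (1 - p 0 ^ 2) * (a 0 * b 2 - a 2 * b 0)
  - p 1 * Real.sin (p 3 - p 2) / (1 - p 0 ^ 2) * (a 0 * b 3 - a 3 * b 0)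
  - p 0 * Real.sin (p 3 - p 2) * (a 1 * b 2 - a 2 * b 1)
  + p 0 * p 1 * Real.cos (p 3 - p 2) * (a 2 * b 3 - a 3 * b 2)

/-- The potential in the northern chart radial coordinate: `Ṽ(ρ) = V(√(1 - ρ²))`. -/
noncomputable def Vtilde (V : ℝ → ℝ) (r : ℝ) : ℝ := V (Real.sqrt (1 - r ^ 2))

/-- The energy in the northern chart:
`H_N (ρ, η, θ, φ) = (η²/2)·(1 - ρ² sin²δ)/(1 - ρ²) + Ṽ(ρ)`, `δ = φ - θ`. -/
noncomputable def HN (V : ℝ → ℝ) (p : Fin 4 → ℝ) : ℝ :=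
  p 1 ^ 2 / 2 * ((1 - p 0 ^ 2 * Real.sin (p 3 - p 2) ^ 2) / (1 - p 0 ^ 2))
    + Vtilde V (p 0)

set_option maxHeartbeats 2000000 in
/-- the stated vector field `X_H` is the Hamiltonian vector field of
the energy `H_N` with respect to `ω_N`: `ω_N(X_H, ·) = dH_N`. -/
theorem XH_is_hamiltonian_vector_field_of_HN
    (V : ℝ → ℝ) (hV : ContDiff ℝ 1 V)
    (p : Fin 4 → ℝ) (h0 : 0 < p 0) (h1 : p 0 < 1) (h2 : 0 < p 1) :
    let δ := p 3 - p 2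
    let C := p 0 * p 1 * (1 - p 0 ^ 2 * Real.sin δ ^ 2) / (1 - p 0 ^ 2)
      + (1 - p 0 ^ 2) * deriv (Vtilde V) (p 0) / p 1
    let XH : Fin 4 → ℝ :=
      ![p 1 * Real.cos δ,
        -(C * (p 1 * Real.cos δ)),
        p 1 / p 0 * Real.sin δ,
        C * Real.sin δ]
    ∀ v : Fin 4 → ℝ, omegaN p XH v = fderiv ℝ (HN V) p v := by
  intro δ C XH v
  have hden : (1 : ℝ) - p 0 ^ 2 ≠ 0 := by nlinarith
  have hρ := hasFDerivAt_apply (𝕜 := ℝ) 0 p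
  have hη := hasFDerivAt_apply (𝕜 := ℝ) 1 p
  have hθ := hasFDerivAt_apply (𝕜 := ℝ) 2 p
  have hφ := hasFDerivAt_apply (𝕜 := ℝ) 3 p
  have hδ := hφ.sub hθ
  have hsin := hδ.sin
  have hρ2 := (hasDerivAt_pow 2 (p 0)).comp_hasFDerivAt p hρ
  have hsin2 := (hasDerivAt_pow 2 (Real.sin (p 3 - p 2))).comp_hasFDerivAt p hsin
  have hη2 := (hasDerivAt_pow 2 (p 1)).comp_hasFDerivAt p hη
  have hnum := (hasFDerivAt_const (1 : ℝ) p).sub (hρ2.mul hsin2)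
  have hdenf := (hasFDerivAt_const (1 : ℝ) p).sub hρ2
  have hinv := (hasDerivAt_inv hden).comp_hasFDerivAt p hdenf
  have hfrac := hnum.mul hinv
  have hsq := hη2.const_mul ((2 : ℝ)⁻¹)
  have hmul := hsq.mul hfrac
  -- Vtilde is differentiable at p 0
  have hVt : DifferentiableAt ℝ (Vtilde V) (p 0) := by
    have hs : (1 : ℝ) - p 0 ^ 2 ≠ 0 := hden
    have hinner : DifferentiableAt ℝ (fun r : ℝ => Real.sqrt (1 - r ^ 2)) (p 0) := by
      have : DifferentiableAt ℝ (fun r : ℝ => (1 : ℝ) - r ^ 2) (p 0) := by fun_prop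
      exact ((Real.hasDerivAt_sqrt hs).differentiableAt).comp (p 0) this
    exact ((hV.differentiable one_ne_zero).differentiableAt).comp (p 0) hinner
  have hVd : HasDerivAt (Vtilde V) (deriv (Vtilde V) (p 0)) (p 0) := hVt.hasDerivAt
  have hVcomp := hVd.comp_hasFDerivAt p hρ
  have htot := hmul.add hVcomp
  have hHN := htot.congr_of_eventuallyEq (show HN V =ᶠ[nhds p] _ from
    Filter.Eventually.of_forall fun q => by
      simp only [HN, Function.comp_apply, Function.comp, Pi.mul_apply, Pi.sub_apply, Pi.add_apply]; ring)
  rw [hHN.fderiv]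
  simp only [ContinuousLinearMap.add_apply, ContinuousLinearMap.smul_apply,
    ContinuousLinearMap.sub_apply, ContinuousLinearMap.zero_apply,
    ContinuousLinearMap.coe_smul', Pi.smul_apply, ContinuousLinearMap.proj_apply,
    smul_eq_mul, ContinuousLinearMap.coe_sub', Pi.sub_apply]
  simp only [omegaN, XH, C, δ, Matrix.cons_val_zero, Matrix.cons_val_one, Matrix.head_cons,
    Matrix.cons_val_two, Matrix.tail_cons, Matrix.cons_val_three]
  set s := Real.sin (p 3 - p 2)
  set c := Real.cos (p 3 - p 2)
  have hsc : s ^ 2 + c ^ 2 = 1 := Real.sin_sq_add_cos_sq _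
  set W := deriv (Vtilde V) (p 0)
  simp only [Function.comp, pow_one, Nat.cast_ofNat, Pi.mul_apply, Pi.sub_apply, Pi.add_apply]
  have hc2 : c ^ 2 = 1 - s ^ 2 := by linarith
  have hρne : p 0 ≠ 0 := ne_of_gt h0
  have hηne : p 1 ≠ 0 := ne_of_gt h2
  field_simp
  ring_nf
  rw [hc2]
  ring
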